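/- arXiv:2010.15975 — 3 statements merged into one kernel-verified Lean document; each statement's English description precedes it below -/
import Mathlib

section
/- The transition system T^di derived from a succinct AFA is well-structured with respect to the inverse pointwise order on state bit-vectors: if Trans(q̄, q̄′) holds and p̄ ≼ q̄, then Trans(p̄, q̄′) also holds (deactivating AFA states can only enable more transitions). Moreover, the set of final configurations, defined by the negative formula F, is downward-closed with respect to ≼. -/
/-- Boolean formulae over variables of type `α`. -/
inductive BF (α : Type) : Type where
  | var : α → BF α
  | tru : BF α
  | fls : BF α
  | and : BF α → BF α → BF α
  | or  : BF α → BF α → BF α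
  | not : BF α → BF α

namespace BF

variable {α β : Type}

/-- Evaluation of a Boolean formula under an assignment. -/
def eval (A : α → Bool) : BF α → Bool
  | var v => A v
  | tru => true
  | fls => false
  | and f g => f.eval A && g.eval A
  | or f g => f.eval A || g.eval A
  | not f => ! f.eval A

/-- `PolarOn P b φ` holds iff every occurrence of a variable satisfying `P`
is under an even number of negations when `b = true`, resp. an odd number
of negations when `b = false`. -/
def PolarOn (P : α → Prop) : Bool → BF α → Prop
  | b, var v => P v → b = true
  | _, tru => True
  | _, fls => True
  | b, and f g => PolarOn P b f ∧ PolarOn P b g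
  | b, or f g => PolarOn P b f ∧ PolarOn P b g
  | b, not f => PolarOn P (!b) f

/-- A formula is positive if every variable occurs under an even number of negations. -/
def Positive (φ : BF α) : Prop := PolarOn (fun _ => True) true φ

/-- A formula is negative if every variable occurs under an odd number of negations. -/
def Negative (φ : BF α) : Prop := PolarOn (fun _ => True) false φ

/-- Renaming of variables. -/
def map (f : α → β) : BF α → BF β
  | var v => var (f v)
  | tru => tru
  | fls => fls
  | and g h => and (g.map f) (h.map f)
  | or g h => or (g.map f) (h.map f)
  | not g => not (g.map f)

/-- The set of variables occurring in a formula. -/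
def varSet : BF α → Set α
  | var v => {v}
  | tru => ∅
  | fls => ∅
  | and f g => f.varSet ∪ g.varSet
  | or f g => f.varSet ∪ g.varSet
  | not f => f.varSet

/-- Finite conjunction. -/
def bigAnd (l : List (BF α)) : BF α := l.foldr and tru

/-- Finite disjunction. -/
def bigOr (l : List (BF α)) : BF α := l.foldr or fls

/-- Biconditional. -/
def iff (f g : BF α) : BF α := (f.and g).or (f.not.and g.not)

end BF

/-- A succinct alternating finite automaton over input bit variables `ι` and
states `Q`: the transition function assigns to each state a Boolean formula
over input variables and states, and there are an initial and a final formula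
over states. -/
structure AFA (ι Q : Type) where
  delta : Q → BF (ι ⊕ Q)
  init : BF Q
  final : BF Q

namespace AFA

variable {ι Q Q' : Type}

/-- Well-formedness of a succinct AFA: transition formulae are positive on
states, the initial formula is positive, and the final formula is negative. -/
def WF (M : AFA ι Q) : Prop :=
  (∀ q, BF.PolarOn (fun x => ∃ p, x = Sum.inr p) true (M.delta q)) ∧
    M.init.Positive ∧ M.final.Negative

/-- One step of a run: every state active in `α` has its transition formula
satisfied by the input letter `b` together with the successor configuration `α'`. -/
def Step (M : AFA ι Q) (α : Q → Bool) (b : ι → Bool) (α' : Q → Bool) : Prop :=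
  ∀ q, α q = true → (M.delta q).eval (Sum.elim b α') = true

/-- A run of the AFA over the word `w`, given by its sequence of configurations. -/
def IsRun (M : AFA ι Q) (w : List (ι → Bool)) (αs : Fin (w.length + 1) → Q → Bool) : Prop :=
  ∀ i : Fin w.length, M.Step (αs i.castSucc) (w.get i) (αs i.succ)

/-- Acceptance: there is a run whose first configuration satisfies the initial
formula and whose last configuration satisfies the final formula. -/
def Accepts (M : AFA ι Q) (w : List (ι → Bool)) : Prop :=
  ∃ αs : Fin (w.length + 1) → Q → Bool,
    M.IsRun w αs ∧ M.init.eval (αs 0) = true ∧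
      M.final.eval (αs (Fin.last w.length)) = true

/-- The language of an AFA. -/
def Lang (M : AFA ι Q) : Set (List (ι → Bool)) := {w | M.Accepts w}

/-- Product (intersection) construction on AFAs with disjoint state sets. -/
def inter (M : AFA ι Q) (M' : AFA ι Q') : AFA ι (Q ⊕ Q') where
  delta := fun q => match q with
    | .inl q => (M.delta q).map (Sum.map id Sum.inl)
    | .inr q => (M'.delta q).map (Sum.map id Sum.inr)
  init := (M.init.map Sum.inl).and (M'.init.map Sum.inr)
  final := (M.final.map Sum.inl).and (M'.final.map Sum.inr)

/-- Union construction on AFAs with disjoint state sets. -/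
def union (M : AFA ι Q) (M' : AFA ι Q') : AFA ι (Q ⊕ Q') where
  delta := fun q => match q with
    | .inl q => (M.delta q).map (Sum.map id Sum.inl)
    | .inr q => (M'.delta q).map (Sum.map id Sum.inr)
  init := (M.init.map Sum.inl).or (M'.init.map Sum.inr)
  final := (M.final.map Sum.inl).and (M'.final.map Sum.inr)

end AFA

/-- The pointwise order on bit-vectors in 𝔹^m. -/
def BVLe {m : ℕ} (p q : Fin m → Bool) : Prop := ∀ i, p i = true → q i = true

/-- The transition relation of the Boolean transition system `T^di` derived from
an AFA with `m` states: `Trans q̄ q̄′` holds iff there is an input bit-vector `v̄`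
such that every active pre-state `i` has `Δ(q_i)` satisfied at `(v̄, q̄′)`. -/
def TransDi {nv m : ℕ} (Δ : Fin m → BF (Fin nv ⊕ Fin m)) (q q' : Fin m → Bool) : Prop :=
  ∃ v : Fin nv → Bool, ∀ i, q i = true → (Δ i).eval (Sum.elim v q') = true

/-! Deactivating a pre-state only removes a conjunct from the constraint defining `TransDi`.
For the final configurations, evaluation of a formula is monotone in the assignment on variables
occurring positively and antitone on those occurring negatively (induction on the formula, with
the polarity flipped under each negation); a negative formula is therefore antitone. -/

namespace BF

variable {α : Type} {P : α → Prop} {A B : α → Bool}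

theorem PolarOn.eval_le_eval (hP : ∀ v, P v → A v ≤ B v) (hnP : ∀ v, ¬ P v → A v = B v)
    {b : Bool} {φ : BF α} (h : PolarOn P b φ) :
    bif b then φ.eval A ≤ φ.eval B else φ.eval B ≤ φ.eval A := by
  induction φ generalizing b with
  | var v =>
    by_cases hv : P v
    · cases b
      · exact absurd (h hv) Bool.false_ne_true
      · exact hP v hv
    · cases b <;> simp [eval, hnP v hv]
  | tru | fls => cases b <;> exact le_rfl
  | and f g ihf ihg => cases b <;> exact inf_le_inf (ihf h.1) (ihg h.2)
  | or f g ihf ihg => cases b <;> exact sup_le_sup (ihf h.1) (ihg h.2)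
  | not f ih => cases b <;> exact compl_le_compl (ih h)

theorem Negative.eval_antitone {φ : BF α} (hφ : φ.Negative) : Antitone φ.eval :=
  fun _ _ hAB => hφ.eval_le_eval (fun v _ => hAB v) (fun _ hv => absurd trivial hv)

end BF

theorem bvLe_iff_le {m : ℕ} {p q : Fin m → Bool} : BVLe p q ↔ p ≤ q :=
  forall_congr' fun _ => Bool.le_iff_imp.symm

theorem TransDi.of_bvLe {nv m : ℕ} {Δ : Fin m → BF (Fin nv ⊕ Fin m)} {p q q' : Fin m → Bool}
    (hq : TransDi Δ q q') (hpq : BVLe p q) : TransDi Δ p q' :=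
  let ⟨v, hv⟩ := hq
  ⟨v, fun i hi => hv i (hpq i hi)⟩

theorem transition_system_well_structured_general {nv m : ℕ}
    (Δ : Fin m → BF (Fin nv ⊕ Fin m))
    (F : BF (Fin m)) (hF : F.Negative) :
    (∀ p q q' : Fin m → Bool, TransDi Δ q q' → BVLe p q → TransDi Δ p q') ∧
    (∀ p q : Fin m → Bool, F.eval q = true → BVLe p q → F.eval p = true) := by
  refine ⟨fun p q q' hq hpq => hq.of_bvLe hpq, fun p q hq hpq => ?_⟩
  exact Bool.le_iff_imp.mp (hF.eval_antitone (bvLe_iff_le.mp hpq)) hq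

/-- the transition system `T^di` of a succinct AFA is
well-structured w.r.t. the inverse pointwise order: if `Trans(q̄,q̄′)` holds and
`p̄ ≼ q̄` then `Trans(p̄,q̄′)`; moreover the set of final configurations, given by
the negative final formula `F`, is downward-closed w.r.t. `≼`. -/
theorem transition_system_well_structured {nv m : ℕ}
    (Δ : Fin m → BF (Fin nv ⊕ Fin m))
    (hΔ : ∀ i, BF.PolarOn (fun x => ∃ p, x = Sum.inr p) true (Δ i))
    (F : BF (Fin m)) (hF : F.Negative) :
    (∀ p q q' : Fin m → Bool, TransDi Δ q q' → BVLe p q → TransDi Δ p q') ∧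
    (∀ p q : Fin m → Bool, F.eval q = true → BVLe p q → F.eval p = true) :=
  transition_system_well_structured_general Δ F hF
end

section
/- The language L(𝒜) of a succinct AFA 𝒜 is nonempty if and only if the transition system T^di_𝒜 = (𝔹^m, Init, Trans) can reach from some state satisfying Init a state satisfying Final, where Init is given by the initial formula I, Trans(q̄,q̄′) holds iff ∃v̄. ⋀_i (q_i → Δ(q_i)[v̄, q̄′]), and Final is given by the final formula F. -/
def Reach {S : Type} (Init : S → Prop) (Tr : S → S → Prop) (Final : S → Prop) : Prop :=
  ∃ (n : ℕ) (qs : Fin (n + 1) → S),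
    Init (qs 0) ∧ (∀ i : Fin n, Tr (qs i.castSucc) (qs i.succ)) ∧ Final (qs (Fin.last n))

theorem reach_iff_exists_labelled_path {S L : Type} (Init : S → Prop) (R : S → L → S → Prop)
    (Final : S → Prop) :
    Reach Init (fun q q' => ∃ b, R q b q') Final ↔
      ∃ (w : List L) (qs : Fin (w.length + 1) → S),
        (∀ i : Fin w.length, R (qs i.castSucc) (w.get i) (qs i.succ)) ∧ Init (qs 0) ∧
          Final (qs (Fin.last w.length)) := by
  constructor
  · rintro ⟨n, qs, hinit, hstep, hfinal⟩
    choose b hb using hstep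
    have hlen : (List.ofFn b).length = n := List.length_ofFn
    refine ⟨List.ofFn b, qs ∘ Fin.cast (congrArg (· + 1) hlen), fun i => ?_, hinit, ?_⟩
    · rw [List.get_ofFn]
      exact hb (i.cast hlen)
    · simpa only [Function.comp_apply, Fin.cast_last] using hfinal
  · rintro ⟨w, qs, hstep, hinit, hfinal⟩
    exact ⟨w.length, qs, hinit, fun i => ⟨w.get i, hstep i⟩, hfinal⟩

theorem afa_emptiness_as_reachability_general {nv m : ℕ} (M : AFA (Fin nv) (Fin m)) :
    M.Lang.Nonempty ↔
      Reach (fun q : Fin m → Bool => M.init.eval q = true)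
        (fun q q' => ∃ v : Fin nv → Bool,
          ∀ i, q i = true → (M.delta i).eval (Sum.elim v q') = true)
        (fun q => M.final.eval q = true) :=
  -- `M.Accepts w` unfolds to a path labelled by `w` along `M.Step`, and the transition
  -- relation is `∃ v, M.Step q v q'`.
  (reach_iff_exists_labelled_path (fun q => M.init.eval q = true) M.Step
    (fun q => M.final.eval q = true)).symm

/-- the language of a succinct AFA `M` with `m` states is nonempty
iff the Boolean transition system `T^di_M = (𝔹^m, Init, Trans)` can reach from a
state satisfying the initial formula `I` a state satisfying the final formula
`F`, where `Trans(q̄,q̄′)` holds iff `∃v̄. ⋀_i (q_i → Δ(q_i)[v̄, q̄′])`. -/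
theorem afa_emptiness_as_reachability {nv m : ℕ} (M : AFA (Fin nv) (Fin m))
    (hwf : M.WF) :
    M.Lang.Nonempty ↔
      Reach (fun q : Fin m → Bool => M.init.eval q = true)
        (fun q q' => ∃ v : Fin nv → Bool,
          ∀ i, q i = true → (M.delta i).eval (Sum.elim v q') = true)
        (fun q => M.final.eval q = true) :=
  afa_emptiness_as_reachability_general M
end

section
/- Two-rail parameter elimination is correct: for an AFT 𝒜[s̄] with synchronisation parameters s̄ = s₁,…,s_n, initial formula I and final formula F, the parameter-free AFT 𝒜′ obtained by (1) adding states s_i⁺, s_i⁻ with self-loop transitions Δ′(s_i⁺)=s_i⁺, Δ′(s_i⁻)=s_i⁻, (2) initial formula I⁺ ∧ ⋀_i(s_i⁺ ∨ s_i⁻) where I⁺ replaces each negative occurrence ¬s_i in I by s_i⁻ and positive occurrence s_i by s_i⁺, and (3) final formula F⁻ ∧ ⋀_i(¬s_i⁺ ∨ ¬s_i⁻) where F⁻ replaces each positive occurrence s_i in F by ¬s_i⁻ and negative occurrence ¬s_i by ¬s_i⁺, recognises exactly the relation {x̄ : ∃ parameter assignment ι. 𝒜 accepts x̄ with ι}.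 -/
/-- A `k`-track letter over value bit variables `V` and epsilon bit variables `E`
is an assignment to the indexed bit variables `(V ⊕ E) × Fin k`.  The word
carried by track `i` is obtained by erasing all positions in which some epsilon
bit of track `i` is set, and restricting the remaining letters to the value
bits of track `i`. -/
def trackWord {V E : Type} [Fintype E] {k : ℕ}
    (w : List ((V ⊕ E) × Fin k → Bool)) (i : Fin k) : List (V → Bool) :=
  (w.filter fun b => ! decide (∃ e : E, b (Sum.inr e, i) = true)).map
    fun b v => b (Sum.inl v, i)

/-- A `k`-track AFT `M` (an AFA over `(V ⊕ E) × Fin k`) recognises the tuple of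
words `t` iff it accepts some word whose track projections are exactly `t`. -/
def AFA.RelAccepts {V E : Type} [Fintype E] {k : ℕ} {Q : Type}
    (M : AFA ((V ⊕ E) × Fin k) Q) (t : Fin k → List (V → Bool)) : Prop :=
  ∃ w, M.Accepts w ∧ ∀ i, trackWord w i = t i

/-- A succinct alternating automaton/transducer with synchronisation parameters
`P`: the initial and final formulae may mention parameters (positively and
negatively) besides states. -/
structure PAFA (ι P Q : Type) where
  delta : Q → BF (ι ⊕ Q)
  init : BF (P ⊕ Q)
  final : BF (P ⊕ Q)

namespace PAFA

variable {ι P Q : Type}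

/-- Well-formedness: transitions positive on states, the initial formula
positive on states, the final formula negative on states (parameters may occur
with both polarities). -/
def WF (M : PAFA ι P Q) : Prop :=
  (∀ q, BF.PolarOn (fun x => ∃ p, x = Sum.inr p) true (M.delta q)) ∧
    BF.PolarOn (fun x => ∃ q, x = Sum.inr q) true M.init ∧
    BF.PolarOn (fun x => ∃ q, x = Sum.inr q) false M.final

/-- Acceptance of a word with a given parameter assignment `π`. -/
def AcceptsWith (M : PAFA ι P Q) (π : P → Bool) (w : List (ι → Bool)) : Prop :=
  ∃ αs : Fin (w.length + 1) → Q → Bool,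
    (∀ i : Fin w.length, ∀ q, αs i.castSucc q = true →
        (M.delta q).eval (Sum.elim (w.get i) (αs i.succ)) = true) ∧
    M.init.eval (Sum.elim π (αs 0)) = true ∧
    M.final.eval (Sum.elim π (αs (Fin.last w.length))) = true

/-- A `k`-track AFT with parameters recognises the tuple `t` with parameter
assignment `π` iff it accepts with `π` some word whose track projections are `t`. -/
def RelAcceptsWith {V E : Type} [Fintype E] {k : ℕ}
    (M : PAFA ((V ⊕ E) × Fin k) P Q) (π : P → Bool)
    (t : Fin k → List (V → Bool)) : Prop :=
  ∃ w, M.AcceptsWith π w ∧ ∀ i, trackWord w i = t i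

end PAFA

/-- Polarity-aware substitution: in the formula (over parameters `P` and states
`Q`), every parameter occurring positively is replaced by `fpos p`, every
parameter occurring negatively (absorbing the negation) by `fneg p`, while
states are mapped by `fst`; connectives at negative polarity are dualised. -/
def rail {P Q S : Type} (fpos fneg : P → BF S) (fst : Q → BF S) :
    Bool → BF (P ⊕ Q) → BF S
  | b, .var (.inl p) => if b then fpos p else fneg p
  | b, .var (.inr q) => if b then fst q else (fst q).not
  | b, .tru => if b then .tru else .fls
  | b, .fls => if b then .fls else .tru
  | b, .and f g => if b then (rail fpos fneg fst b f).and (rail fpos fneg fst b g)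
      else (rail fpos fneg fst b f).or (rail fpos fneg fst b g)
  | b, .or f g => if b then (rail fpos fneg fst b f).or (rail fpos fneg fst b g)
      else (rail fpos fneg fst b f).and (rail fpos fneg fst b g)
  | b, .not f => rail fpos fneg fst (!b) f

/-- Two-rail parameter elimination: each parameter `s_i` is encoded by a
positive indicator state `s_i⁺ = inr (inl i)` and a negative indicator state
`s_i⁻ = inr (inr i)`, both with self-loop transitions.  The new initial formula
is `I⁺ ∧ ⋀_i (s_i⁺ ∨ s_i⁻)` and the new final formula is
`F⁻ ∧ ⋀_i (¬s_i⁺ ∨ ¬s_i⁻)`. -/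
def elimParams {ι Q : Type} {n : ℕ} (M : PAFA ι (Fin n) Q) :
    AFA ι (Q ⊕ (Fin n ⊕ Fin n)) where
  delta := fun s => match s with
    | .inl q => (M.delta q).map (Sum.map id Sum.inl)
    | .inr x => .var (.inr (.inr x))
  init :=
    (rail (fun p => .var (.inr (.inl p))) (fun p => .var (.inr (.inr p)))
        (fun q => .var (.inl q)) true M.init).and
      (BF.bigAnd ((List.finRange n).map fun p =>
        (BF.var (.inr (.inl p))).or (BF.var (.inr (.inr p)))))
  final :=
    (rail (fun p => (BF.var (.inr (.inr p))).not) (fun p => (BF.var (.inr (.inl p))).not)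
        (fun q => .var (.inl q)) true M.final).and
      (BF.bigAnd ((List.finRange n).map fun p =>
        ((BF.var (.inr (.inl p))).not).or ((BF.var (.inr (.inr p))).not)))

/-!
When the indicator states encode an assignment `π` exactly (`s_p⁺` on iff `π p`, `s_p⁻` on iff
not), `I⁺` and `F⁻` evaluate like `I` and `F` under `π` and the indicator conjuncts hold, so
runs of `M` with `π` and runs of `elimParams M` correspond. Conversely, in any accepting run of
`elimParams M` the self-loops make the indicator states monotone, the initial formula switches
on at least one and the final formula at most one of `s_p⁺, s_p⁻`; hence exactly one of them is
on throughout, and the run encodes some `π`.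
-/

namespace BF

variable {α β : Type}

theorem eval_map (f : α → β) (A : β → Bool) (φ : BF α) :
    (φ.map f).eval A = φ.eval (A ∘ f) := by
  induction φ <;> simp [map, eval, *]

theorem eval_bigAnd_eq_true (A : α → Bool) (l : List (BF α)) :
    (bigAnd l).eval A = true ↔ ∀ f ∈ l, f.eval A = true := by
  induction l with
  | nil => simp [bigAnd, eval]
  | cons f l ih => simp [bigAnd, eval, ← ih]

end BF

theorem eval_rail {P Q S : Type} {fpos fneg : P → BF S} {fst : Q → BF S}
    {A : S → Bool} {π : P → Bool} {σ : Q → Bool}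
    (hpos : ∀ p, (fpos p).eval A = π p) (hneg : ∀ p, (fneg p).eval A = !π p)
    (hst : ∀ q, (fst q).eval A = σ q) (b : Bool) (φ : BF (P ⊕ Q)) :
    (rail fpos fneg fst b φ).eval A = (b == φ.eval (Sum.elim π σ)) := by
  induction φ generalizing b with
  | var v => rcases v with p | q <;> cases b <;> simp [rail, BF.eval, hpos, hneg, hst]
  | tru | fls => cases b <;> rfl
  | and f g ihf ihg | or f g ihf ihg =>
    cases b <;> simp only [rail, BF.eval, ihf, ihg, if_true, Bool.false_eq_true, if_false] <;>
      cases f.eval (Sum.elim π σ) <;> cases g.eval (Sum.elim π σ) <;> rfl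
  | not f ih => simp only [rail, BF.eval, ih]; cases b <;> cases f.eval (Sum.elim π σ) <;> rfl

def twoRail {n : ℕ} (π : Fin n → Bool) : Fin n ⊕ Fin n → Bool :=
  Sum.elim π fun p => !π p

theorem Bool.eq_twoRail_of_le {a b a' b' : Bool} (ha : a ≤ a') (hb : b ≤ b')
    (hab : (a || b) = true) (hab' : (a' && b') = false) : a' = a ∧ b = !a ∧ b' = !a := by
  revert a b a' b'; decide

namespace elimParams

variable {ι Q : Type} {n : ℕ} (M : PAFA ι (Fin n) Q)

theorem eval_delta_inl (q : Q) (b : ι → Bool) (α : Q ⊕ (Fin n ⊕ Fin n) → Bool) :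
    ((elimParams M).delta (.inl q)).eval (Sum.elim b α) =
      (M.delta q).eval (Sum.elim b (α ∘ Sum.inl)) := by
  rw [elimParams, BF.eval_map]
  congr 1
  ext (x | x) <;> rfl

theorem eval_init (σ : Q → Bool) (π : Fin n → Bool) :
    (elimParams M).init.eval (Sum.elim σ (twoRail π)) = M.init.eval (Sum.elim π σ) := by
  have hind : (BF.bigAnd ((List.finRange n).map fun p =>
      (BF.var (.inr (.inl p))).or (BF.var (.inr (.inr p))))).eval
        (Sum.elim σ (twoRail π)) = true := by
    simp [BF.eval_bigAnd_eq_true, BF.eval, twoRail]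
  simp only [elimParams, BF.eval, hind, Bool.and_true]
  simpa using eval_rail (A := Sum.elim σ (twoRail π)) (π := π) (σ := σ)
    (fun _ => rfl) (fun _ => rfl) (fun _ => rfl) true M.init

theorem eval_final (σ : Q → Bool) (π : Fin n → Bool) :
    (elimParams M).final.eval (Sum.elim σ (twoRail π)) = M.final.eval (Sum.elim π σ) := by
  have hind : (BF.bigAnd ((List.finRange n).map fun p =>
      ((BF.var (.inr (.inl p))).not).or ((BF.var (.inr (.inr p))).not))).eval
        (Sum.elim σ (twoRail π)) = true := by
    simp [BF.eval_bigAnd_eq_true, BF.eval, twoRail]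
  simp only [elimParams, BF.eval, hind, Bool.and_true]
  simpa using eval_rail (A := Sum.elim σ (twoRail π)) (π := π) (σ := σ)
    (fun _ => by simp [BF.eval, twoRail]) (fun _ => by simp [BF.eval, twoRail])
    (fun _ => rfl) true M.final

theorem indicators_of_eval_init {α : Q ⊕ (Fin n ⊕ Fin n) → Bool}
    (h : (elimParams M).init.eval α = true) (p : Fin n) :
    (α (.inr (.inl p)) || α (.inr (.inr p))) = true := by
  simp only [elimParams, BF.eval, Bool.and_eq_true, BF.eval_bigAnd_eq_true] at h
  simpa [BF.eval] using h.2 _ (List.mem_map_of_mem (List.mem_finRange p))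

theorem indicators_of_eval_final {α : Q ⊕ (Fin n ⊕ Fin n) → Bool}
    (h : (elimParams M).final.eval α = true) (p : Fin n) :
    (α (.inr (.inl p)) && α (.inr (.inr p))) = false := by
  simp only [elimParams, BF.eval, Bool.and_eq_true, BF.eval_bigAnd_eq_true] at h
  rw [Bool.and_eq_false_iff]
  simpa [BF.eval] using h.2 _ (List.mem_map_of_mem (List.mem_finRange p))

theorem monotone_indicator {w : List (ι → Bool)} {αs : Fin (w.length + 1) → _ → Bool}
    (hrun : (elimParams M).IsRun w αs) (x : Fin n ⊕ Fin n) :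
    Monotone fun i => αs i (.inr x) := by
  refine Fin.monotone_iff_le_succ.2 fun i => ?_
  cases h : αs i.castSucc (.inr x)
  · exact Bool.false_le _
  · have hnext := hrun i (.inr x) h
    simp only [elimParams, BF.eval, Sum.elim_inr] at hnext
    simp [hnext]

theorem exists_twoRail_of_accepting {w : List (ι → Bool)} {αs : Fin (w.length + 1) → _ → Bool}
    (hrun : (elimParams M).IsRun w αs) (hinit : (elimParams M).init.eval (αs 0) = true)
    (hfinal : (elimParams M).final.eval (αs (Fin.last _)) = true) :
    ∃ π, αs 0 ∘ Sum.inr = twoRail π ∧ αs (Fin.last _) ∘ Sum.inr = twoRail π := by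
  have hsqueeze (p : Fin n) := Bool.eq_twoRail_of_le
    (monotone_indicator M hrun (.inl p) (Fin.zero_le _))
    (monotone_indicator M hrun (.inr p) (Fin.zero_le _))
    (indicators_of_eval_init M hinit p) (indicators_of_eval_final M hfinal p)
  refine ⟨fun p => αs 0 (.inr (.inl p)), ?_, ?_⟩ <;>
    ext (p | p) <;> simp [twoRail, hsqueeze p]

theorem accepts_iff (w : List (ι → Bool)) :
    (elimParams M).Accepts w ↔ ∃ π, M.AcceptsWith π w := by
  constructor
  · rintro ⟨αs, hrun, hinit, hfinal⟩
    obtain ⟨π, h0, hlast⟩ := exists_twoRail_of_accepting M hrun hinit hfinal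
    have hsplit (i) : αs i = Sum.elim (αs i ∘ Sum.inl) (αs i ∘ Sum.inr) :=
      (Sum.elim_comp_inl_inr _).symm
    refine ⟨π, fun i => αs i ∘ Sum.inl, fun i q hq => ?_, ?_, ?_⟩
    · simpa [eval_delta_inl] using hrun i (.inl q) hq
    · rwa [← eval_init, ← h0, ← hsplit]
    · rwa [← eval_final, ← hlast, ← hsplit]
  · rintro ⟨π, αs, hrun, hinit, hfinal⟩
    refine ⟨fun i => Sum.elim (αs i) (twoRail π), ?_, ?_, ?_⟩
    · rintro i (q | x) hq
      · simpa [eval_delta_inl] using hrun i q hq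
      · simpa [elimParams, BF.eval] using hq
    · rwa [eval_init]
    · rwa [eval_final]

end elimParams

theorem param_elimination_correct_general {V E : Type} [Fintype E] {k n : ℕ} {Q : Type}
    (M : PAFA ((V ⊕ E) × Fin k) (Fin n) Q)
    (t : Fin k → List (V → Bool)) :
    (elimParams M).RelAccepts t ↔ ∃ π : Fin n → Bool, M.RelAcceptsWith π t := by
  simp only [AFA.RelAccepts, PAFA.RelAcceptsWith, elimParams.accepts_iff]
  grind

/-- two-rail parameter elimination is correct: the parameter-free
AFT `elimParams M` recognises exactly the tuples of words that `M` accepts with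
some assignment of the synchronisation parameters. -/
theorem param_elimination_correct {V E : Type} [Fintype E] {k n : ℕ} {Q : Type}
    (M : PAFA ((V ⊕ E) × Fin k) (Fin n) Q) (hwf : M.WF)
    (t : Fin k → List (V → Bool)) :
    (elimParams M).RelAccepts t ↔ ∃ π : Fin n → Bool, M.RelAcceptsWith π t :=
  param_elimination_correct_general M t
end
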